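/- arXiv:2404.12597 — 5 statements merged into one kernel-verified Lean document; each statement's English description precedes it below -/
import Mathlib

section
/- Let n, B be positive integers, Ψ ∈ ℝ^{n×B}, let Σ ∈ ℝ^{B×B} be symmetric positive definite, and let K₀ ∈ ℝ^{n×n} be symmetric positive definite. Set K = Ψ Σ Ψᵀ + K₀ (which is then positive definite, and Σ^{-1} + Ψᵀ K₀^{-1} Ψ is positive definite). Then Σ Ψᵀ K^{-2} Ψ Σ = (Σ^{-1} + Ψᵀ K₀^{-1} Ψ)^{-1} (Ψᵀ K₀^{-2} Ψ) (Σ^{-1} + Ψᵀ K₀^{-1} Ψ)^{-1}. -/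
open Matrix

/-- Woodbury-type identity: for `K = Ψ Σ Ψᵀ + K₀` with `Σ`, `K₀` symmetric positive
definite, `K` and `Σ⁻¹ + Ψᵀ K₀⁻¹ Ψ` are positive definite and
`Σ Ψᵀ K⁻² Ψ Σ = (Σ⁻¹ + Ψᵀ K₀⁻¹ Ψ)⁻¹ (Ψᵀ K₀⁻² Ψ) (Σ⁻¹ + Ψᵀ K₀⁻¹ Ψ)⁻¹`. -/
theorem statement6 (n B : ℕ) (hn : 0 < n) (hB : 0 < B)
    (Ψ : Matrix (Fin n) (Fin B) ℝ)
    (S : Matrix (Fin B) (Fin B) ℝ) (hS : S.PosDef)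
    (K₀ : Matrix (Fin n) (Fin n) ℝ) (hK₀ : K₀.PosDef)
    (K : Matrix (Fin n) (Fin n) ℝ) (hK : K = Ψ * S * Ψᵀ + K₀) :
    K.PosDef ∧ (S⁻¹ + Ψᵀ * K₀⁻¹ * Ψ).PosDef ∧
      S * Ψᵀ * (K⁻¹ * K⁻¹) * Ψ * S =
        (S⁻¹ + Ψᵀ * K₀⁻¹ * Ψ)⁻¹ * (Ψᵀ * (K₀⁻¹ * K₀⁻¹) * Ψ) *
          (S⁻¹ + Ψᵀ * K₀⁻¹ * Ψ)⁻¹ := by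
  have hT : (Ψᵀ : Matrix (Fin B) (Fin n) ℝ) = Ψᴴ := by
    ext i j; simp [conjTranspose_apply]
  have hpsd : (Ψ * S * Ψᵀ).PosSemidef := by
    rw [hT]; exact hS.posSemidef.mul_mul_conjTranspose_same Ψ
  have hKpd : K.PosDef := by
    rw [hK]; exact (add_comm (Ψ * S * Ψᵀ) K₀ ▸ hK₀.add_posSemidef hpsd)
  set M := S⁻¹ + Ψᵀ * K₀⁻¹ * Ψ with hM
  have hpsd2 : (Ψᵀ * K₀⁻¹ * Ψ).PosSemidef := by
    have : Ψᵀ * K₀⁻¹ * Ψ = Ψᴴ * K₀⁻¹ * Ψ := by rw [hT]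
    rw [this]; exact hK₀.inv.posSemidef.conjTranspose_mul_mul_same Ψ
  have hMpd : M.PosDef := hS.inv.add_posSemidef hpsd2
  refine ⟨hKpd, hMpd, ?_⟩
  -- key identity: M * (S * Ψᵀ) = Ψᵀ * K₀⁻¹ * K
  have hSinv : S⁻¹ * S = 1 := nonsing_inv_mul S hS.det_pos.ne'.isUnit
  have hK₀inv : K₀⁻¹ * K₀ = 1 := nonsing_inv_mul K₀ hK₀.det_pos.ne'.isUnit
  have hKinv : K * K⁻¹ = 1 := mul_nonsing_inv K hKpd.det_pos.ne'.isUnit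
  have hMinv : M⁻¹ * M = 1 := nonsing_inv_mul M hMpd.det_pos.ne'.isUnit
  have key : M * (S * Ψᵀ) = Ψᵀ * (K₀⁻¹ * K) := by
    rw [hK, hM]
    rw [Matrix.add_mul, Matrix.mul_add, Matrix.mul_add]
    rw [show S⁻¹ * (S * Ψᵀ) = Ψᵀ by rw [← Matrix.mul_assoc, hSinv, Matrix.one_mul]]
    rw [show K₀⁻¹ * K₀ = 1 from hK₀inv, Matrix.mul_one]
    rw [add_comm]
    congr 1
    simp [Matrix.mul_assoc]
  have key2 : S * Ψᵀ * K⁻¹ = M⁻¹ * (Ψᵀ * K₀⁻¹) := by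
    have := congrArg (fun X => M⁻¹ * X * K⁻¹) key
    simpa [Matrix.mul_assoc, ← Matrix.mul_assoc M⁻¹ M, hMinv,
      hKinv, Matrix.mul_assoc] using this
  -- transpose version
  have hSsym : Sᵀ = S := hS.isHermitian.eq
  have hK₀sym : K₀ᵀ = K₀ := hK₀.isHermitian.eq
  have hKsym : Kᵀ = K := hKpd.isHermitian.eq
  have hMsym : Mᵀ = M := hMpd.isHermitian.eq
  have key3 : K⁻¹ * (Ψ * S) = K₀⁻¹ * Ψ * M⁻¹ := by
    have := congrArg Matrix.transpose key2
    simpa [Matrix.transpose_mul, Matrix.transpose_nonsing_inv, hSsym, hK₀sym, hKsym, hMsym,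
      Matrix.mul_assoc] using this
  calc S * Ψᵀ * (K⁻¹ * K⁻¹) * Ψ * S
      = (S * Ψᵀ * K⁻¹) * (K⁻¹ * (Ψ * S)) := by simp [Matrix.mul_assoc]
    _ = (M⁻¹ * (Ψᵀ * K₀⁻¹)) * (K₀⁻¹ * Ψ * M⁻¹) := by rw [key2, key3]
    _ = M⁻¹ * (Ψᵀ * (K₀⁻¹ * K₀⁻¹) * Ψ) * M⁻¹ := by simp [Matrix.mul_assoc]
end

section
/- Let n, B be positive integers, Ψ ∈ ℝ^{n×B}, and let 0 < a ≤ b and c₀ > 0 be constants. Suppose: (i) the operator norm bound ‖ΨᵀΨ/n − I_B‖_op ≤ 1/2 holds; (ii) K₀ ∈ ℝ^{n×n} is symmetric with a·I_n ⪯ K₀ ⪯ b·I_n (in the Loewner order); and (iii) Σ ∈ ℝ^{B×B} is a positive definite diagonal matrix with ‖Σ^{-1}‖_op ≤ c₀ n. Then the matrix M = (Σ^{-1}/n + Ψᵀ K₀^{-1} Ψ / n)^{-1} is well defined, symmetric positive definite, and every eigenvalue λ of M satisfies (c₀ + 3/(2a))^{-1} ≤ λ ≤ 2b. -/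
open Matrix

/-- The ℓ²→ℓ² operator (spectral) norm of a real matrix. -/
noncomputable def l2OpNorm {m n : ℕ} (A : Matrix (Fin m) (Fin n) ℝ) : ℝ :=
  ‖LinearMap.toContinuousLinearMap (Matrix.toEuclideanLin A)‖

/-!
Write `A = Σ⁻¹/n + Ψᵀ K₀⁻¹ Ψ/n`, so `M = A⁻¹`. Everything follows from two-sided bounds on the
quadratic form of `A`. The operator-norm hypothesis gives `|x|²/2 ≤ |Ψ x|²/n ≤ 3|x|²/2`; the
Loewner bounds `a ≤ K₀ ≤ b` invert to `1/b ≤ K₀⁻¹ ≤ 1/a`, because `wᵀ K⁻¹ w` is the maximum of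
`2 xᵀw - xᵀ K x`; and `0 ≤ Σ⁻¹ ≤ c₀ n`. Hence `|x|²/(2b) ≤ xᵀ A x ≤ (c₀ + 3/(2a)) |x|²`, while an
eigenvector `v` of `M` with eigenvalue `λ` has `vᵀ A v = λ⁻¹ |v|²`.
-/

lemma abs_dotProduct_mulVec_le_of_l2OpNorm_le {k : ℕ} {A : Matrix (Fin k) (Fin k) ℝ} {c : ℝ}
    (h : l2OpNorm A ≤ c) (x : Fin k → ℝ) : |x ⬝ᵥ (A *ᵥ x)| ≤ c * (x ⬝ᵥ x) := by
  set T := LinearMap.toContinuousLinearMap (Matrix.toEuclideanLin A)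
  set y : EuclideanSpace ℝ (Fin k) := WithLp.toLp 2 x
  have hquad : x ⬝ᵥ (A *ᵥ x) = inner ℝ y (T y) := dotProduct_comm _ _
  have hnorm : x ⬝ᵥ x = ‖y‖ ^ 2 := by
    rw [← real_inner_self_eq_norm_sq]; rfl
  calc |x ⬝ᵥ (A *ᵥ x)| ≤ ‖y‖ * ‖T y‖ := hquad ▸ abs_real_inner_le_norm _ _
    _ ≤ ‖y‖ * (c * ‖y‖) := by gcongr; exact (T.le_opNorm y).trans (by gcongr; exact h)
    _ = c * (x ⬝ᵥ x) := by rw [hnorm]; ring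

lemma dotProduct_mulVec_mem_Icc_of_l2OpNorm_sub_one_le {k : ℕ} {X : Matrix (Fin k) (Fin k) ℝ}
    {ε : ℝ} (h : l2OpNorm (X - 1) ≤ ε) (x : Fin k → ℝ) :
    x ⬝ᵥ (X *ᵥ x) ∈ Set.Icc ((1 - ε) * (x ⬝ᵥ x)) ((1 + ε) * (x ⬝ᵥ x)) := by
  have := abs_dotProduct_mulVec_le_of_l2OpNorm_le h x
  rw [sub_mulVec, one_mulVec, dotProduct_sub, abs_le] at this
  constructor <;> linarith [this.1, this.2]

lemma posDef_of_posSemidef_sub_smul_one {m : Type*} [DecidableEq m] {K : Matrix m m ℝ} {a : ℝ}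
    (ha : 0 < a) (h : (K - a • 1).PosSemidef) : K.PosDef := by
  simpa using PosDef.posSemidef_add h (PosDef.one.smul ha)

section QuadraticForm

variable {m k : Type*} [Fintype m] [Fintype k]

lemma dotProduct_transpose_mul_mulVec (Ψ N : Matrix m k ℝ) (x : k → ℝ) :
    x ⬝ᵥ ((Ψᵀ * N) *ᵥ x) = (Ψ *ᵥ x) ⬝ᵥ (N *ᵥ x) := by
  rw [← mulVec_mulVec, dotProduct_mulVec, vecMul_transpose]

lemma dotProduct_smul_add_transpose_mul_mul_mulVec (θ : ℝ) (P : Matrix k k ℝ)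
    (Ψ : Matrix m k ℝ) (K : Matrix m m ℝ) (x : k → ℝ) :
    x ⬝ᵥ ((θ • P + θ • (Ψᵀ * K * Ψ)) *ᵥ x) =
      θ * (x ⬝ᵥ (P *ᵥ x)) + θ * ((Ψ *ᵥ x) ⬝ᵥ (K *ᵥ (Ψ *ᵥ x))) := by
  rw [add_mulVec, smul_mulVec, smul_mulVec, dotProduct_add, dotProduct_smul, dotProduct_smul,
    Matrix.mul_assoc, dotProduct_transpose_mul_mulVec, ← mulVec_mulVec, smul_eq_mul, smul_eq_mul]

lemma dotProduct_mulVec_le_of_posSemidef_sub {A B : Matrix m m ℝ} (h : (A - B).PosSemidef)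
    (x : m → ℝ) : x ⬝ᵥ (B *ᵥ x) ≤ x ⬝ᵥ (A *ᵥ x) := by
  have := h.dotProduct_mulVec_nonneg x
  rw [star_trivial, sub_mulVec, dotProduct_sub] at this
  linarith

variable [DecidableEq m]

lemma mulVec_nonsing_inv_mulVec {K : Matrix m m ℝ} (hK : IsUnit K) (w : m → ℝ) :
    K *ᵥ (K⁻¹ *ᵥ w) = w := by
  rw [mulVec_mulVec, mul_nonsing_inv _ ((isUnit_iff_isUnit_det K).mp hK), one_mulVec]

lemma two_mul_dotProduct_sub_le_dotProduct_inv_mulVec {K : Matrix m m ℝ} (hK : K.PosDef)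
    (x w : m → ℝ) : 2 * (x ⬝ᵥ w) - x ⬝ᵥ (K *ᵥ x) ≤ w ⬝ᵥ (K⁻¹ *ᵥ w) := by
  set u := K⁻¹ *ᵥ w
  have hu : K *ᵥ u = w := mulVec_nonsing_inv_mulVec hK.isUnit w
  have hsymm : u ⬝ᵥ (K *ᵥ x) = x ⬝ᵥ w := by
    rw [dotProduct_mulVec, ← mulVec_transpose, ← conjTranspose_eq_transpose_of_trivial,
      hK.isHermitian.eq, hu, dotProduct_comm]
  have := hK.posSemidef.dotProduct_mulVec_nonneg (x - u)
  simp only [star_trivial, mulVec_sub, hu, sub_dotProduct, dotProduct_sub, hsymm] at this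
  linarith [dotProduct_comm u w]

lemma dotProduct_self_le_mul_dotProduct_inv_mulVec {K : Matrix m m ℝ} {b : ℝ} (hK : K.PosDef)
    (hb : 0 < b) (hKb : (b • 1 - K).PosSemidef) (w : m → ℝ) :
    w ⬝ᵥ w ≤ b * (w ⬝ᵥ (K⁻¹ *ᵥ w)) := by
  have h₁ := two_mul_dotProduct_sub_le_dotProduct_inv_mulVec hK (b⁻¹ • w) w
  have h₂ := dotProduct_mulVec_le_of_posSemidef_sub hKb (b⁻¹ • w)
  simp only [smul_mulVec, one_mulVec, mulVec_smul, smul_dotProduct, dotProduct_smul,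
    smul_eq_mul] at h₁ h₂
  have : b * (b⁻¹ * (b⁻¹ * (w ⬝ᵥ w))) = b⁻¹ * (w ⬝ᵥ w) := by field_simp
  rw [← inv_mul_le_iff₀ hb]
  linarith

lemma mul_dotProduct_inv_mulVec_le_dotProduct_self {K : Matrix m m ℝ} {a : ℝ} (ha : 0 < a)
    (hKa : (K - a • 1).PosSemidef) (w : m → ℝ) : a * (w ⬝ᵥ (K⁻¹ *ᵥ w)) ≤ w ⬝ᵥ w := by
  set u := K⁻¹ *ᵥ w
  have hu : K *ᵥ u = w :=
    mulVec_nonsing_inv_mulVec (posDef_of_posSemidef_sub_smul_one ha hKa).isUnit w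
  have h₁ : a * (u ⬝ᵥ u) ≤ u ⬝ᵥ w := by
    simpa [hu, smul_mulVec, dotProduct_smul] using dotProduct_mulVec_le_of_posSemidef_sub hKa u
  have h₂ : 0 ≤ (a • u - w) ⬝ᵥ (a • u - w) := by
    simpa using dotProduct_star_self_nonneg (a • u - w)
  simp only [sub_dotProduct, dotProduct_sub, smul_dotProduct, dotProduct_smul, smul_eq_mul] at h₂
  nlinarith [mul_le_mul_of_nonneg_left h₁ ha.le, dotProduct_comm u w]

lemma mem_Icc_of_nonsing_inv_mulVec_eq_smul {A : Matrix m m ℝ} {α β μ : ℝ} {v : m → ℝ}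
    (hA : IsUnit A) (hα : 0 < α) (hlow : ∀ x, α * (x ⬝ᵥ x) ≤ x ⬝ᵥ (A *ᵥ x))
    (hup : ∀ x, x ⬝ᵥ (A *ᵥ x) ≤ β * (x ⬝ᵥ x)) (hv : v ≠ 0) (hμ : A⁻¹ *ᵥ v = μ • v) :
    μ ∈ Set.Icc β⁻¹ α⁻¹ := by
  have hvv : 0 < v ⬝ᵥ v := by simpa using dotProduct_star_self_pos_iff.mpr hv
  have hq : 0 < v ⬝ᵥ (A *ᵥ v) := (mul_pos hα hvv).trans_le (hlow v)
  have hβ : 0 < β := pos_of_mul_pos_left (hq.trans_le (hup v)) hvv.le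
  have hμq : μ * (v ⬝ᵥ (A *ᵥ v)) = v ⬝ᵥ v := by
    rw [← smul_eq_mul, ← dotProduct_smul, ← mulVec_smul, ← hμ, mulVec_nonsing_inv_mulVec hA]
  rw [← eq_div_iff hq.ne'] at hμq
  rw [hμq, Set.mem_Icc, le_div_iff₀ hq, div_le_iff₀ hq, inv_mul_le_iff₀ hβ, le_inv_mul_iff₀ hα]
  exact ⟨hup v, hlow v⟩

variable {θ : ℝ} {P : Matrix k k ℝ} {Ψ : Matrix m k ℝ} {K : Matrix m m ℝ}

lemma le_dotProduct_smul_add_conj_inv_mulVec {α b : ℝ} (hθ : 0 ≤ θ) (hP : P.PosSemidef)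
    (hK : K.PosDef) (hb : 0 < b) (hKb : (b • 1 - K).PosSemidef)
    (hΨ : ∀ x, α * (x ⬝ᵥ x) ≤ θ * ((Ψ *ᵥ x) ⬝ᵥ (Ψ *ᵥ x))) (x : k → ℝ) :
    α / b * (x ⬝ᵥ x) ≤ x ⬝ᵥ ((θ • P + θ • (Ψᵀ * K⁻¹ * Ψ)) *ᵥ x) := by
  have hPx : 0 ≤ θ * (x ⬝ᵥ (P *ᵥ x)) := by
    simpa using mul_nonneg hθ (hP.dotProduct_mulVec_nonneg x)
  have hKx := mul_le_mul_of_nonneg_left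
    (dotProduct_self_le_mul_dotProduct_inv_mulVec hK hb hKb (Ψ *ᵥ x)) hθ
  rw [dotProduct_smul_add_transpose_mul_mul_mulVec, div_mul_eq_mul_div, div_le_iff₀ hb]
  nlinarith [hΨ x]

lemma dotProduct_smul_add_conj_inv_mulVec_le {a β γ : ℝ} (hθ : 0 ≤ θ)
    (hP : ∀ x, x ⬝ᵥ (P *ᵥ x) ≤ γ * (x ⬝ᵥ x)) (ha : 0 < a) (hKa : (K - a • 1).PosSemidef)
    (hΨ : ∀ x, θ * ((Ψ *ᵥ x) ⬝ᵥ (Ψ *ᵥ x)) ≤ β * (x ⬝ᵥ x)) (x : k → ℝ) :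
    x ⬝ᵥ ((θ • P + θ • (Ψᵀ * K⁻¹ * Ψ)) *ᵥ x) ≤ (θ * γ + β / a) * (x ⬝ᵥ x) := by
  have hPx := mul_le_mul_of_nonneg_left (hP x) hθ
  have hKx := mul_le_mul_of_nonneg_left
    (mul_dotProduct_inv_mulVec_le_dotProduct_self ha hKa (Ψ *ᵥ x)) hθ
  have hΨK : θ * ((Ψ *ᵥ x) ⬝ᵥ (K⁻¹ *ᵥ (Ψ *ᵥ x))) ≤ β * (x ⬝ᵥ x) / a := by
    rw [le_div_iff₀ ha]; nlinarith [hΨ x]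
  rw [dotProduct_smul_add_transpose_mul_mul_mulVec, add_mul, div_mul_eq_mul_div]
  linarith

end QuadraticForm

theorem statement10_general (n B : ℕ) (hn : 0 < n)
    (Ψ : Matrix (Fin n) (Fin B) ℝ)
    (a b c₀ : ℝ) (ha : 0 < a) (hab : a ≤ b)
    (hΨ : l2OpNorm ((n : ℝ)⁻¹ • (Ψᵀ * Ψ) - 1) ≤ 1 / 2)
    (K₀ : Matrix (Fin n) (Fin n) ℝ)
    (hK₀low : (K₀ - a • (1 : Matrix (Fin n) (Fin n) ℝ)).PosSemidef)
    (hK₀up : (b • (1 : Matrix (Fin n) (Fin n) ℝ) - K₀).PosSemidef)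
    (S : Matrix (Fin B) (Fin B) ℝ) (hSpos : S.PosDef)
    (hSinv : l2OpNorm S⁻¹ ≤ c₀ * n)
    (M : Matrix (Fin B) (Fin B) ℝ)
    (hM : M = ((n : ℝ)⁻¹ • S⁻¹ + (n : ℝ)⁻¹ • (Ψᵀ * K₀⁻¹ * Ψ))⁻¹) :
    ((n : ℝ)⁻¹ • S⁻¹ + (n : ℝ)⁻¹ • (Ψᵀ * K₀⁻¹ * Ψ)).PosDef ∧ M.PosDef ∧
      ∀ (lam : ℝ) (v : Fin B → ℝ), v ≠ 0 → M *ᵥ v = lam • v →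
        (c₀ + 3 / (2 * a))⁻¹ ≤ lam ∧ lam ≤ 2 * b := by
  have hθ : (0 : ℝ) < (n : ℝ)⁻¹ := by positivity
  have hb : 0 < b := ha.trans_le hab
  have hK₀ : K₀.PosDef := posDef_of_posSemidef_sub_smul_one ha hK₀low
  have hA : ((n : ℝ)⁻¹ • S⁻¹ + (n : ℝ)⁻¹ • (Ψᵀ * K₀⁻¹ * Ψ)).PosDef :=
    (hSpos.inv.smul hθ).add_posSemidef
      (by simpa using (hK₀.inv.posSemidef.conjTranspose_mul_mul_same Ψ).smul hθ.le)
  have hΨx (x : Fin B → ℝ) := dotProduct_mulVec_mem_Icc_of_l2OpNorm_sub_one_le hΨ x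
  simp only [smul_mulVec, dotProduct_smul, smul_eq_mul, dotProduct_transpose_mul_mulVec] at hΨx
  have hlow := le_dotProduct_smul_add_conj_inv_mulVec hθ.le hSpos.inv.posSemidef hK₀ hb hK₀up
    (fun x => (hΨx x).1)
  have hup := dotProduct_smul_add_conj_inv_mulVec_le hθ.le
    (fun x => (le_abs_self _).trans (abs_dotProduct_mulVec_le_of_l2OpNorm_le hSinv x))
    ha hK₀low (fun x => (hΨx x).2)
  refine ⟨hA, hM ▸ hA.inv, fun lam v hv hMv => ?_⟩
  have hlam := mem_Icc_of_nonsing_inv_mulVec_eq_smul hA.isUnit (by positivity) hlow hup hv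
    (hM ▸ hMv)
  have hc : (n : ℝ)⁻¹ * (c₀ * n) + (1 + 1 / 2) / a = c₀ + 3 / (2 * a) := by
    field_simp; ring
  have hb' : ((1 - 1 / 2) / b)⁻¹ = 2 * b := by field_simp; ring
  rwa [hc, hb'] at hlam

/-- Bounds on the eigenvalues of `M = (Σ⁻¹/n + Ψᵀ K₀⁻¹ Ψ/n)⁻¹` when
`‖ΨᵀΨ/n − I‖_op ≤ 1/2`, `a I ⪯ K₀ ⪯ b I` with `K₀` symmetric, and `Σ` is a positive
definite diagonal matrix with `‖Σ⁻¹‖_op ≤ c₀ n`. -/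
theorem statement10 (n B : ℕ) (hn : 0 < n) (hB : 0 < B)
    (Ψ : Matrix (Fin n) (Fin B) ℝ)
    (a b c₀ : ℝ) (ha : 0 < a) (hab : a ≤ b) (hc₀ : 0 < c₀)
    (hΨ : l2OpNorm ((n : ℝ)⁻¹ • (Ψᵀ * Ψ) - 1) ≤ 1 / 2)
    (K₀ : Matrix (Fin n) (Fin n) ℝ) (hK₀symm : K₀.IsSymm)
    (hK₀low : (K₀ - a • (1 : Matrix (Fin n) (Fin n) ℝ)).PosSemidef)
    (hK₀up : (b • (1 : Matrix (Fin n) (Fin n) ℝ) - K₀).PosSemidef)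
    (S : Matrix (Fin B) (Fin B) ℝ) (hSdiag : S.IsDiag) (hSpos : S.PosDef)
    (hSinv : l2OpNorm S⁻¹ ≤ c₀ * n)
    (M : Matrix (Fin B) (Fin B) ℝ)
    (hM : M = ((n : ℝ)⁻¹ • S⁻¹ + (n : ℝ)⁻¹ • (Ψᵀ * K₀⁻¹ * Ψ))⁻¹) :
    ((n : ℝ)⁻¹ • S⁻¹ + (n : ℝ)⁻¹ • (Ψᵀ * K₀⁻¹ * Ψ)).PosDef ∧ M.PosDef ∧
      ∀ (lam : ℝ) (v : Fin B → ℝ), v ≠ 0 → M *ᵥ v = lam • v →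
        (c₀ + 3 / (2 * a))⁻¹ ≤ lam ∧ lam ≤ 2 * b :=
  statement10_general n B hn Ψ a b c₀ ha hab hΨ K₀ hK₀low hK₀up S hSpos hSinv M hM
end

section
/- Let n, B be positive integers, Ψ ∈ ℝ^{n×B}, and let 0 < a ≤ b and c₀ > 0 be constants. Suppose: (i) ‖ΨᵀΨ/n − I_B‖_op ≤ 1/2; (ii) K₀ ∈ ℝ^{n×n} is symmetric with a·I_n ⪯ K₀ ⪯ b·I_n; and (iii) Σ ∈ ℝ^{B×B} is a positive definite diagonal matrix with ‖Σ^{-1}‖_op ≤ c₀ n. Set K = Ψ Σ Ψᵀ + K₀. Then there exist constants c > 0 and C > 0 depending only on a, b, c₀ such that c · B/n ≤ tr(Σ Ψᵀ K^{-2} Ψ Σ) ≤ C · B/n. -/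
open Matrix

/-
By the push-through identity `Σ Ψᵀ K⁻¹ = G⁻¹ Ψᵀ K₀⁻¹` with `G = Σ⁻¹ + Ψᵀ K₀⁻¹ Ψ`, the matrix
`Σ Ψᵀ K⁻² Ψ Σ` equals `G⁻¹ X G⁻¹` with `X = Ψᵀ K₀⁻² Ψ`. Since `n/2 ≤ ΨᵀΨ ≤ 3n/2` and
`a ≤ K₀ ≤ b` in the Loewner order, both `X` and `G` lie between constant multiples of `n · I`
(for `G` the upper bound also uses `Σ⁻¹ ≤ c₀ n`). Hence `G⁻¹ X G⁻¹` lies between constant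
multiples of `n⁻¹ · I`, and its trace is of order `B / n`.
-/

open scoped MatrixOrder

namespace Matrix

section Loewner

variable {ι κ : Type*}

theorem posDef_of_smul_one_le [DecidableEq ι] {A : Matrix ι ι ℝ} {μ : ℝ} (hμ : 0 < μ)
    (h : μ • 1 ≤ A) : A.PosDef := by
  simpa using (PosDef.one.smul hμ).add_posSemidef h

theorem isSelfAdjoint_of_smul_one_le [Fintype ι] [DecidableEq ι] {A : Matrix ι ι ℝ} {μ : ℝ}
    (h : μ • 1 ≤ A) : IsSelfAdjoint A := by
  simpa [Algebra.algebraMap_eq_smul_one] using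
    (IsSelfAdjoint.of_nonneg (sub_nonneg.2 h)).add (.algebraMap (Matrix ι ι ℝ) (.all μ))

theorem mem_Icc_smul_one_iff_spectrum_subset [Fintype ι] [DecidableEq ι] {A : Matrix ι ι ℝ}
    (hA : IsSelfAdjoint A) (μ ν : ℝ) :
    A ∈ Set.Icc (μ • 1) (ν • 1) ↔ spectrum ℝ A ⊆ Set.Icc μ ν := by
  simp only [Set.mem_Icc, ← Algebra.algebraMap_eq_smul_one, algebraMap_le_iff_le_spectrum hA,
    le_algebraMap_iff_spectrum_le hA, Set.subset_def]
  grind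

theorem inv_pow_mem_Icc [Fintype ι] [DecidableEq ι] {A : Matrix ι ι ℝ} {μ ν : ℝ} (hμ : 0 < μ)
    (hA : A ∈ Set.Icc (μ • 1) (ν • 1)) (k : ℕ) :
    A⁻¹ ^ k ∈ Set.Icc (ν⁻¹ ^ k • 1) (μ⁻¹ ^ k • 1) := by
  have hsa := isSelfAdjoint_of_smul_one_le hA.1
  have hspec := (mem_Icc_smul_one_iff_spectrum_subset hsa μ ν).1 hA
  have hinv : ContinuousOn (·⁻¹) (spectrum ℝ A) :=
    continuousOn_inv₀.mono fun x hx => (hμ.trans_le (hspec hx).1).ne'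
  have hcfc : cfc (fun x : ℝ => x⁻¹ ^ k) A = A⁻¹ ^ k := by
    rw [cfc_pow _ _ _ hinv,
      cfc_ringInverse_id _ (posDef_of_smul_one_le hμ hA.1).isUnit, nonsing_inv_eq_ringInverse]
  rw [← hcfc, mem_Icc_smul_one_iff_spectrum_subset (cfc_predicate _ A),
    cfc_map_spectrum (fun x : ℝ => x⁻¹ ^ k) A hsa (hinv.pow k)]
  rintro _ ⟨x, hx, rfl⟩
  obtain ⟨hμx, hxν⟩ := hspec hx
  have hx0 : 0 < x := hμ.trans_le hμx
  exact ⟨pow_le_pow_left₀ (inv_nonneg.2 (hx0.le.trans hxν)) (inv_anti₀ hx0 hxν) k,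
    pow_le_pow_left₀ (inv_pos.2 hx0).le (inv_anti₀ hμ hμx) k⟩

theorem transpose_mul_mul_le_transpose_mul_mul [Fintype ι] [Fintype κ] {A B : Matrix ι ι ℝ}
    (h : A ≤ B) (Ψ : Matrix ι κ ℝ) : Ψᵀ * A * Ψ ≤ Ψᵀ * B * Ψ := by
  rw [le_iff, ← Matrix.sub_mul, ← Matrix.mul_sub, ← conjTranspose_eq_transpose_of_trivial]
  exact h.conjTranspose_mul_mul_same Ψ

theorem transpose_mul_mul_mem_Icc [Fintype ι] [DecidableEq ι] [Fintype κ] [DecidableEq κ]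
    {A : Matrix ι ι ℝ} {Ψ : Matrix ι κ ℝ} {m M p q : ℝ} (hm : 0 ≤ m) (hM : 0 ≤ M)
    (hA : A ∈ Set.Icc (m • 1) (M • 1)) (hΨ : Ψᵀ * Ψ ∈ Set.Icc (p • 1) (q • 1)) :
    Ψᵀ * A * Ψ ∈ Set.Icc ((m * p) • 1) ((M * q) • 1) := by
  have hlo := transpose_mul_mul_le_transpose_mul_mul hA.1 Ψ
  have hhi := transpose_mul_mul_le_transpose_mul_mul hA.2 Ψ
  simp only [Matrix.mul_smul, Matrix.mul_one, Matrix.smul_mul] at hlo hhi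
  rw [mul_smul, mul_smul]
  exact ⟨(smul_le_smul_of_nonneg_left hΨ.1 hm).trans hlo,
    hhi.trans (smul_le_smul_of_nonneg_left hΨ.2 hM)⟩

theorem trace_mono [Fintype ι] {A B : Matrix ι ι ℝ} (h : A ≤ B) : A.trace ≤ B.trace := by
  simpa [trace_sub] using h.trace_nonneg

theorem trace_mem_Icc [Fintype ι] [DecidableEq ι] {A : Matrix ι ι ℝ} {μ ν : ℝ}
    (hA : A ∈ Set.Icc (μ • 1) (ν • 1)) :
    A.trace ∈ Set.Icc (μ * Fintype.card ι) (ν * Fintype.card ι) := by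
  simpa using And.intro (trace_mono hA.1) (trace_mono hA.2)

end Loewner

section PushThrough

variable {α : Type*} [CommRing α] {m n : Type*} [Fintype m] [DecidableEq m] [Fintype n]
  [DecidableEq n] {S : Matrix m m α} {K₀ : Matrix n n α} {U : Matrix m n α} {V : Matrix n m α}

theorem mul_mul_inv_add_eq (hS : IsUnit S) (hK₀ : IsUnit K₀) (hK : IsUnit (V * S * U + K₀))
    (hG : IsUnit (S⁻¹ + U * K₀⁻¹ * V)) :
    S * U * (V * S * U + K₀)⁻¹ = (S⁻¹ + U * K₀⁻¹ * V)⁻¹ * U * K₀⁻¹ := by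
  rw [isUnit_iff_isUnit_det] at hS hK₀ hK hG
  have key : (S⁻¹ + U * K₀⁻¹ * V) * (S * U) = U * K₀⁻¹ * (V * S * U + K₀) := by
    simp only [Matrix.add_mul, Matrix.mul_add, Matrix.mul_assoc,
      nonsing_inv_mul_cancel_left _ _ hS, nonsing_inv_mul_cancel_right _ _ hK₀]
    exact add_comm _ _
  calc S * U * (V * S * U + K₀)⁻¹
      = (S⁻¹ + U * K₀⁻¹ * V)⁻¹ * ((S⁻¹ + U * K₀⁻¹ * V) * (S * U)) * (V * S * U + K₀)⁻¹ := by
        rw [nonsing_inv_mul_cancel_left _ _ hG]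
    _ = (S⁻¹ + U * K₀⁻¹ * V)⁻¹ * U * K₀⁻¹ := by
        rw [key]; simp only [← Matrix.mul_assoc, mul_nonsing_inv_cancel_right _ _ hK]

theorem inv_add_mul_mul_eq (hS : IsUnit S) (hK₀ : IsUnit K₀) (hK : IsUnit (V * S * U + K₀))
    (hG : IsUnit (S⁻¹ + U * K₀⁻¹ * V)) :
    (V * S * U + K₀)⁻¹ * V * S = K₀⁻¹ * V * (S⁻¹ + U * K₀⁻¹ * V)⁻¹ := by
  rw [isUnit_iff_isUnit_det] at hS hK₀ hK hG
  have key : (V * S * U + K₀) * (K₀⁻¹ * V) = V * S * (S⁻¹ + U * K₀⁻¹ * V) := by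
    simp only [Matrix.add_mul, Matrix.mul_add, Matrix.mul_assoc,
      mul_nonsing_inv_cancel_left _ _ hK₀, mul_nonsing_inv_cancel_right _ _ hS]
    exact add_comm _ _
  calc (V * S * U + K₀)⁻¹ * V * S
      = (V * S * U + K₀)⁻¹ * (V * S * (S⁻¹ + U * K₀⁻¹ * V)) * (S⁻¹ + U * K₀⁻¹ * V)⁻¹ := by
        simp only [← Matrix.mul_assoc, mul_nonsing_inv_cancel_right _ _ hG]
    _ = K₀⁻¹ * V * (S⁻¹ + U * K₀⁻¹ * V)⁻¹ := by
        rw [← key, ← Matrix.mul_assoc, nonsing_inv_mul _ hK, Matrix.one_mul]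

theorem mul_mul_inv_mul_inv_mul_mul_eq (hS : IsUnit S) (hK₀ : IsUnit K₀)
    (hK : IsUnit (V * S * U + K₀)) (hG : IsUnit (S⁻¹ + U * K₀⁻¹ * V)) :
    S * U * ((V * S * U + K₀)⁻¹ * (V * S * U + K₀)⁻¹) * V * S =
      (S⁻¹ + U * K₀⁻¹ * V)⁻¹ * (U * K₀⁻¹ ^ 2 * V) * (S⁻¹ + U * K₀⁻¹ * V)⁻¹ := by
  calc _ = (S * U * (V * S * U + K₀)⁻¹) * ((V * S * U + K₀)⁻¹ * V * S) := by
        simp only [Matrix.mul_assoc]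
    _ = _ := by
        rw [mul_mul_inv_add_eq hS hK₀ hK hG, inv_add_mul_mul_eq hS hK₀ hK hG]
        simp only [Matrix.mul_assoc, sq]

end PushThrough

end Matrix

open scoped Matrix.Norms.L2Operator in
theorem Matrix.IsHermitian.mem_Icc_of_l2OpNorm_le {k : ℕ} [Nonempty (Fin k)]
    {A : Matrix (Fin k) (Fin k) ℝ} (hA : A.IsHermitian) {t : ℝ} (h : l2OpNorm A ≤ t) :
    A ∈ Set.Icc (-t • 1) (t • 1) :=
  (mem_Icc_smul_one_iff_spectrum_subset hA.isSelfAdjoint _ _).2 fun _ hx =>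
    abs_le.1 ((spectrum.norm_le_norm_of_mem hx).trans h)

theorem Matrix.IsHermitian.mem_Icc_of_l2OpNorm_inv_smul_sub_one_le {k : ℕ} [Nonempty (Fin k)]
    {P : Matrix (Fin k) (Fin k) ℝ} (hP : P.IsHermitian) {r t : ℝ} (hr : 0 < r)
    (h : l2OpNorm (r⁻¹ • P - 1) ≤ t) : P ∈ Set.Icc ((r * (1 - t)) • 1) ((r * (1 + t)) • 1) := by
  obtain ⟨hlo, hhi⟩ := ((hP.smul (.all r⁻¹)).sub isHermitian_one).mem_Icc_of_l2OpNorm_le h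
  have hP' : r • ((r⁻¹ • P - 1) + 1) = P := by
    rw [sub_add_cancel, smul_smul, mul_inv_cancel₀ hr.ne', one_smul]
  constructor
  · calc (r * (1 - t)) • (1 : Matrix (Fin k) (Fin k) ℝ) = r • (-t • 1 + 1) := by module
      _ ≤ r • ((r⁻¹ • P - 1) + 1) := smul_le_smul_of_nonneg_left (add_le_add_left hlo 1) hr.le
      _ = P := hP'
  · calc P = r • ((r⁻¹ • P - 1) + 1) := hP'.symm
      _ ≤ r • (t • 1 + 1) := smul_le_smul_of_nonneg_left (add_le_add_left hhi 1) hr.le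
      _ = (r * (1 + t)) • 1 := by module

noncomputable def lowFrequencyVariance {ι κ : Type*} [Fintype ι] [DecidableEq ι] [Fintype κ]
    [DecidableEq κ] (Ψ : Matrix ι κ ℝ) (S : Matrix κ κ ℝ) (K₀ : Matrix ι ι ℝ) : ℝ :=
  (S * Ψᵀ * ((Ψ * S * Ψᵀ + K₀)⁻¹ * (Ψ * S * Ψᵀ + K₀)⁻¹) * Ψ * S).trace

theorem lowFrequencyVariance_mem_Icc {ι κ : Type*} [Fintype ι] [DecidableEq ι] [Fintype κ]
    [DecidableEq κ] {Ψ : Matrix ι κ ℝ} {S : Matrix κ κ ℝ} {K₀ : Matrix ι ι ℝ} {a b s p q : ℝ}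
    (ha : 0 < a) (hb : 0 < b) (hp : 0 < p) (hq : 0 ≤ q) (hK₀ : K₀ ∈ Set.Icc (a • 1) (b • 1))
    (hS : S.PosDef) (hSinv : S⁻¹ ≤ s • 1) (hgram : Ψᵀ * Ψ ∈ Set.Icc (p • 1) (q • 1)) :
    lowFrequencyVariance Ψ S K₀ ∈ Set.Icc (b⁻¹ ^ 2 * p * (s + a⁻¹ * q)⁻¹ ^ 2 * Fintype.card κ)
      (a⁻¹ ^ 2 * q * (b⁻¹ * p)⁻¹ ^ 2 * Fintype.card κ) := by
  set G := S⁻¹ + Ψᵀ * K₀⁻¹ * Ψ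
  have hL : Ψᵀ * K₀⁻¹ * Ψ ∈ Set.Icc ((b⁻¹ * p) • 1) ((a⁻¹ * q) • 1) :=
    transpose_mul_mul_mem_Icc (by positivity) (by positivity)
      (by simpa using inv_pow_mem_Icc ha hK₀ 1) hgram
  have hX := transpose_mul_mul_mem_Icc (by positivity) (by positivity)
    (inv_pow_mem_Icc ha hK₀ 2) hgram
  have hG : G ∈ Set.Icc ((b⁻¹ * p) • 1) ((s + a⁻¹ * q) • 1) := by
    refine ⟨hL.1.trans (le_add_of_nonneg_left hS.inv.posSemidef.nonneg), ?_⟩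
    rw [add_smul]
    exact add_le_add hSinv hL.2
  have hμ : 0 < b⁻¹ * p := by positivity
  have hGpos := posDef_of_smul_one_le hμ hG.1
  have hGinv : G⁻¹ᵀ = G⁻¹ := by
    rw [← conjTranspose_eq_transpose_of_trivial, hGpos.inv.isHermitian.eq]
  have hT := transpose_mul_mul_mem_Icc (Ψ := G⁻¹) (by positivity) (by positivity) hX
    (by rw [hGinv, ← sq]; exact inv_pow_mem_Icc hμ hG 2)
  have hK : a • 1 ≤ Ψ * S * Ψᵀ + K₀ := hK₀.1.trans <| le_add_of_nonneg_left <| by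
    simpa using (hS.posSemidef.mul_mul_conjTranspose_same Ψ).nonneg
  rw [hGinv] at hT
  rw [lowFrequencyVariance, mul_mul_inv_mul_inv_mul_mul_eq hS.isUnit
    (posDef_of_smul_one_le ha hK₀.1).isUnit (posDef_of_smul_one_le ha hK).isUnit hGpos.isUnit]
  exact trace_mem_Icc hT

/-- There exist constants `c, C > 0` depending only on `a, b, c₀` such that the
low-frequency variance contribution `tr(Σ Ψᵀ K⁻² Ψ Σ)`, with `K = Ψ Σ Ψᵀ + K₀`,
is of exact order `B/n` whenever `‖ΨᵀΨ/n − I‖_op ≤ 1/2`, `a I ⪯ K₀ ⪯ b I` with `K₀`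
symmetric, and `Σ` is positive definite diagonal with `‖Σ⁻¹‖_op ≤ c₀ n`. -/
theorem statement12 (a b c₀ : ℝ) (ha : 0 < a) (hab : a ≤ b) (hc₀ : 0 < c₀) :
    ∃ c : ℝ, 0 < c ∧ ∃ C : ℝ, 0 < C ∧
      ∀ (n B : ℕ), 0 < n → 0 < B →
        ∀ (Ψ : Matrix (Fin n) (Fin B) ℝ) (K₀ : Matrix (Fin n) (Fin n) ℝ)
          (S : Matrix (Fin B) (Fin B) ℝ),
          l2OpNorm ((n : ℝ)⁻¹ • (Ψᵀ * Ψ) - 1) ≤ 1 / 2 →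
          K₀.IsSymm →
          (K₀ - a • (1 : Matrix (Fin n) (Fin n) ℝ)).PosSemidef →
          (b • (1 : Matrix (Fin n) (Fin n) ℝ) - K₀).PosSemidef →
          S.IsDiag → S.PosDef → l2OpNorm S⁻¹ ≤ c₀ * n →
          c * B / n ≤
              (S * Ψᵀ * ((Ψ * S * Ψᵀ + K₀)⁻¹ * (Ψ * S * Ψᵀ + K₀)⁻¹) * Ψ * S).trace ∧
            (S * Ψᵀ * ((Ψ * S * Ψᵀ + K₀)⁻¹ * (Ψ * S * Ψᵀ + K₀)⁻¹) * Ψ * S).trace ≤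
              C * B / n := by
  have hb : 0 < b := ha.trans_le hab
  -- the bounds of `lowFrequencyVariance_mem_Icc` for `p = n/2`, `q = 3n/2` and `s = c₀ n`
  refine ⟨(2 * b ^ 2 * (c₀ + 3 / (2 * a)) ^ 2)⁻¹, by positivity, 6 * b ^ 2 / a ^ 2,
    by positivity, ?_⟩
  intro n B hn hB Ψ K₀ S hΨ _ hK₀a hK₀b _ hS hSinv
  have : Nonempty (Fin B) := ⟨⟨0, hB⟩⟩
  have hnR : (0 : ℝ) < n := Nat.cast_pos.2 hn
  have hΨΨ : (Ψᵀ * Ψ).IsHermitian := by simpa using isHermitian_conjTranspose_mul_self Ψ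
  have hgram := hΨΨ.mem_Icc_of_l2OpNorm_inv_smul_sub_one_le hnR hΨ
  obtain ⟨hlo, hhi⟩ := lowFrequencyVariance_mem_Icc ha hb (by norm_num [hnR]) (by positivity)
    ⟨hK₀a, hK₀b⟩ hS (hS.inv.isHermitian.mem_Icc_of_l2OpNorm_le hSinv).2 hgram
  rw [Fintype.card_fin] at hlo hhi
  constructor
  · refine le_of_eq_of_le ?_ hlo
    field_simp
    ring
  · refine hhi.trans_eq ?_
    field_simp
    ring
end

section
/- Fix γ > 0 with l = ⌊γ⌋, fix s ≥ 0 and set s̃ = min{s, 2}, and fix constants C₁ > 0, C₂ > 0, R > 0, c₀ > 0. Suppose for each integer d ≥ 2 we are given positive reals μ₀,…,μ_l and nonnegative reals t₀,…,t_l such that: (i) C₁ d^{−k} ≤ μ_k ≤ C₂ d^{−k} for all 0 ≤ k ≤ l; (ii) Σ_{k=0}^{l} μ_k^{−s} t_k ≤ R; (iii) Σ_{k=0}^{l} t_k ≥ c₀; and (iv) μ_l^{−s} t_l ≥ c₀. Then there exist constants c > 0, C > 0 and D (depending only on s, γ, R, c₀, C₁, C₂) such that for all d ≥ D: c d^{(2−s̃)l}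 ≤ Σ_{k=0}^{l} μ_k^{−2} t_k ≤ C d^{(2−s̃)l}. -/
/-- For `x > 0`, `(x^2)⁻¹ * y = x^(s-2) * (x^(-s) * y)`. -/
lemma statement13_aux (x y s : ℝ) (hx : 0 < x) :
    ((x : ℝ) ^ 2)⁻¹ * y = x ^ (s - 2) * (x ^ (-s) * y) := by
  rw [← mul_assoc, ← Real.rpow_add hx, show s - 2 + -s = -2 by ring,
    Real.rpow_neg hx.le, show ((2:ℝ)) = ((2:ℕ):ℝ) by norm_num, Real.rpow_natCast]

lemma statement13_aux2 (d : ℝ) (hd : 0 < d) (c e : ℝ) (l : ℕ) (hc : 0 ≤ c) :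
    (c * ((d : ℝ) ^ l)⁻¹) ^ e = c ^ e * d ^ (-(e * l)) := by
  rw [Real.mul_rpow hc (by positivity), ← Real.rpow_natCast d l,
    ← Real.rpow_neg hd.le, ← Real.rpow_mul hd.le]
  ring_nf

/-- Exact order of `‖Σ_{≤l}^{-1} θ*_{≤l}‖₂² = Σ_{k=0}^{l} μ_k^{-2} t_k` under the
source condition of smoothness `s`, where `t_k` is the squared `ℓ²` mass of the
degree-`k` coefficients of the true function. -/
theorem statement13 (γ : ℝ) (hγ : 0 < γ) (l : ℕ) (hl : l = ⌊γ⌋₊)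
    (s : ℝ) (hs : 0 ≤ s)
    (C₁ C₂ R c₀ : ℝ) (hC₁ : 0 < C₁) (hC₂ : 0 < C₂) (hR : 0 < R) (hc₀ : 0 < c₀)
    (μ t : ℕ → ℕ → ℝ)
    (hμpos : ∀ d : ℕ, 2 ≤ d → ∀ k : ℕ, k ≤ l → 0 < μ d k)
    (htnn : ∀ d : ℕ, 2 ≤ d → ∀ k : ℕ, k ≤ l → 0 ≤ t d k)
    (hμ : ∀ d : ℕ, 2 ≤ d → ∀ k : ℕ, k ≤ l →
      C₁ * ((d : ℝ) ^ k)⁻¹ ≤ μ d k ∧ μ d k ≤ C₂ * ((d : ℝ) ^ k)⁻¹)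
    (hsource : ∀ d : ℕ, 2 ≤ d →
      ∑ k ∈ Finset.range (l + 1), (μ d k) ^ (-s) * t d k ≤ R)
    (hlowfreq : ∀ d : ℕ, 2 ≤ d → c₀ ≤ ∑ k ∈ Finset.range (l + 1), t d k)
    (hdegl : ∀ d : ℕ, 2 ≤ d → c₀ ≤ (μ d l) ^ (-s) * t d l) :
    ∃ c : ℝ, 0 < c ∧ ∃ C : ℝ, 0 < C ∧ ∃ D : ℕ,
      ∀ d : ℕ, D ≤ d →
        c * (d : ℝ) ^ ((2 - min s 2) * l) ≤
            ∑ k ∈ Finset.range (l + 1), ((μ d k) ^ 2)⁻¹ * t d k ∧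
          ∑ k ∈ Finset.range (l + 1), ((μ d k) ^ 2)⁻¹ * t d k ≤
            C * (d : ℝ) ^ ((2 - min s 2) * l) := by
  have hlmem : l ∈ Finset.range (l + 1) := Finset.self_mem_range_succ l
  rcases le_or_gt s 2 with hs2 | hs2
  · -- case s ≤ 2
    have hmin : min s 2 = s := min_eq_left hs2
    refine ⟨c₀ * C₂ ^ (s - 2), by positivity, R * C₁ ^ (s - 2), by positivity, 2, ?_⟩
    intro d hd
    have hd1 : (1:ℝ) ≤ (d : ℝ) := by exact_mod_cast le_trans (by norm_num) hd
    have hd0 : (0:ℝ) < (d : ℝ) := lt_of_lt_of_le one_pos hd1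
    have hE : ((2 : ℝ) - min s 2) * l = -((s - 2) * l) := by rw [hmin]; ring
    rw [hE]
    have hterm : ∀ k ∈ Finset.range (l + 1),
        ((μ d k) ^ 2)⁻¹ * t d k ≤
          C₁ ^ (s - 2) * (d : ℝ) ^ (-((s - 2) * l)) * ((μ d k) ^ (-s) * t d k) := by
      intro k hk
      have hkl : k ≤ l := Nat.lt_succ_iff.mp (Finset.mem_range.mp hk)
      have mp := hμpos d hd k hkl
      have hlb := (hμ d hd k hkl).1
      have htk := htnn d hd k hkl
      rw [statement13_aux (μ d k) (t d k) s mp]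
      have h1 : (μ d k) ^ (s - 2) ≤ (C₁ * ((d : ℝ) ^ k)⁻¹) ^ (s - 2) :=
        Real.rpow_le_rpow_of_nonpos (by positivity) hlb (by linarith)
      have h2 : (C₁ * ((d : ℝ) ^ k)⁻¹) ^ (s - 2)
          = C₁ ^ (s - 2) * (d : ℝ) ^ (-((s - 2) * k)) :=
        statement13_aux2 (d : ℝ) hd0 C₁ (s - 2) k hC₁.le
      have h3 : (d : ℝ) ^ (-((s - 2) * (k : ℝ))) ≤ (d : ℝ) ^ (-((s - 2) * (l : ℝ))) := by
        apply Real.rpow_le_rpow_of_exponent_le hd1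
        have : (k : ℝ) ≤ (l : ℝ) := by exact_mod_cast hkl
        nlinarith
      have hμst : 0 ≤ (μ d k) ^ (-s) * t d k := by positivity
      calc (μ d k) ^ (s - 2) * ((μ d k) ^ (-s) * t d k)
          ≤ (C₁ ^ (s - 2) * (d : ℝ) ^ (-((s - 2) * l))) * ((μ d k) ^ (-s) * t d k) := by
            apply mul_le_mul_of_nonneg_right _ hμst
            calc (μ d k) ^ (s - 2) ≤ C₁ ^ (s - 2) * (d : ℝ) ^ (-((s - 2) * k)) :=
                  h1.trans_eq h2
              _ ≤ C₁ ^ (s - 2) * (d : ℝ) ^ (-((s - 2) * l)) := by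
                  apply mul_le_mul_of_nonneg_left h3 (by positivity)
        _ = _ := rfl
    constructor
    · -- lower bound via degree-l term
      have mp := hμpos d hd l le_rfl
      have hub := (hμ d hd l le_rfl).2
      have h1 : c₀ * (μ d l) ^ s ≤ t d l := by
        have h := hdegl d hd
        rw [Real.rpow_neg mp.le, inv_mul_eq_div] at h
        exact (le_div_iff₀ (Real.rpow_pos_of_pos mp s)).mp h
      have key : c₀ * C₂ ^ (s - 2) * (d : ℝ) ^ (-((s - 2) * l))
          ≤ ((μ d l) ^ 2)⁻¹ * t d l := by
        have e1 : ((μ d l) ^ 2)⁻¹ * (c₀ * (μ d l) ^ s) = c₀ * (μ d l) ^ (s - 2) := by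
          rw [statement13_aux (μ d l) (c₀ * (μ d l) ^ s) s mp,
            ← mul_assoc ((μ d l) ^ (-s)) c₀, mul_comm ((μ d l) ^ (-s)) c₀, mul_assoc,
            ← Real.rpow_add mp, show -s + s = 0 by ring, Real.rpow_zero, mul_one]
          ring
        have h2 : (μ d l) ^ (s - 2) ≥ (C₂ * ((d : ℝ) ^ l)⁻¹) ^ (s - 2) :=
          Real.rpow_le_rpow_of_nonpos mp hub (by linarith)
        have h3 : (C₂ * ((d : ℝ) ^ l)⁻¹) ^ (s - 2)
            = C₂ ^ (s - 2) * (d : ℝ) ^ (-((s - 2) * l)) :=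
          statement13_aux2 (d : ℝ) hd0 C₂ (s - 2) l hC₂.le
        have h4 : c₀ * (C₂ ^ (s - 2) * (d : ℝ) ^ (-((s - 2) * l)))
            ≤ c₀ * (μ d l) ^ (s - 2) := by
          apply mul_le_mul_of_nonneg_left _ hc₀.le
          rw [← h3]; exact h2
        calc c₀ * C₂ ^ (s - 2) * (d : ℝ) ^ (-((s - 2) * l))
            = c₀ * (C₂ ^ (s - 2) * (d : ℝ) ^ (-((s - 2) * l))) := by ring
          _ ≤ c₀ * (μ d l) ^ (s - 2) := h4
          _ = ((μ d l) ^ 2)⁻¹ * (c₀ * (μ d l) ^ s) := e1.symm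
          _ ≤ ((μ d l) ^ 2)⁻¹ * t d l := by
              apply mul_le_mul_of_nonneg_left h1 (by positivity)
      refine le_trans key ?_
      apply Finset.single_le_sum (f := fun k => ((μ d k) ^ 2)⁻¹ * t d k) ?_ hlmem
      intro k hk
      have hkl : k ≤ l := Nat.lt_succ_iff.mp (Finset.mem_range.mp hk)
      have := hμpos d hd k hkl
      have := htnn d hd k hkl
      positivity
    · -- upper bound
      calc ∑ k ∈ Finset.range (l + 1), ((μ d k) ^ 2)⁻¹ * t d k
          ≤ ∑ k ∈ Finset.range (l + 1),
              C₁ ^ (s - 2) * (d : ℝ) ^ (-((s - 2) * l)) * ((μ d k) ^ (-s) * t d k) :=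
            Finset.sum_le_sum hterm
        _ = C₁ ^ (s - 2) * (d : ℝ) ^ (-((s - 2) * l)) *
              ∑ k ∈ Finset.range (l + 1), (μ d k) ^ (-s) * t d k := by
            rw [Finset.mul_sum]
        _ ≤ C₁ ^ (s - 2) * (d : ℝ) ^ (-((s - 2) * l)) * R := by
            apply mul_le_mul_of_nonneg_left (hsource d hd) (by positivity)
        _ = R * C₁ ^ (s - 2) * (d : ℝ) ^ (-((s - 2) * l)) := by ring
  · -- case s > 2
    have hmin : min s 2 = 2 := min_eq_right hs2.le
    refine ⟨c₀ / C₂ ^ 2, by positivity, R * C₂ ^ (s - 2), by positivity, 2, ?_⟩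
    intro d hd
    have hd1 : (1:ℝ) ≤ (d : ℝ) := by exact_mod_cast le_trans (by norm_num) hd
    have hd0 : (0:ℝ) < (d : ℝ) := lt_of_lt_of_le one_pos hd1
    have hE : ((2 : ℝ) - min s 2) * l = 0 := by rw [hmin]; ring
    rw [hE, Real.rpow_zero, mul_one, mul_one]
    have hub : ∀ k : ℕ, k ≤ l → μ d k ≤ C₂ := by
      intro k hkl
      refine le_trans (hμ d hd k hkl).2 ?_
      have h1 : (1:ℝ) ≤ (d : ℝ) ^ k := one_le_pow₀ hd1
      have : ((d : ℝ) ^ k)⁻¹ ≤ 1 := inv_le_one_of_one_le₀ h1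
      nlinarith
    constructor
    · -- lower bound via hlowfreq
      have hterm : ∀ k ∈ Finset.range (l + 1),
          (C₂ ^ 2)⁻¹ * t d k ≤ ((μ d k) ^ 2)⁻¹ * t d k := by
        intro k hk
        have hkl : k ≤ l := Nat.lt_succ_iff.mp (Finset.mem_range.mp hk)
        have mp := hμpos d hd k hkl
        have htk := htnn d hd k hkl
        apply mul_le_mul_of_nonneg_right _ htk
        apply inv_anti₀ (by positivity)
        have := hub k hkl
        nlinarith
      calc c₀ / C₂ ^ 2 = (C₂ ^ 2)⁻¹ * c₀ := by ring
        _ ≤ (C₂ ^ 2)⁻¹ * ∑ k ∈ Finset.range (l + 1), t d k := by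
            apply mul_le_mul_of_nonneg_left (hlowfreq d hd) (by positivity)
        _ = ∑ k ∈ Finset.range (l + 1), (C₂ ^ 2)⁻¹ * t d k := by rw [Finset.mul_sum]
        _ ≤ _ := Finset.sum_le_sum hterm
    · -- upper bound
      have hterm : ∀ k ∈ Finset.range (l + 1),
          ((μ d k) ^ 2)⁻¹ * t d k ≤ C₂ ^ (s - 2) * ((μ d k) ^ (-s) * t d k) := by
        intro k hk
        have hkl : k ≤ l := Nat.lt_succ_iff.mp (Finset.mem_range.mp hk)
        have mp := hμpos d hd k hkl
        have htk := htnn d hd k hkl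
        rw [statement13_aux (μ d k) (t d k) s mp]
        apply mul_le_mul_of_nonneg_right _ (by positivity)
        exact Real.rpow_le_rpow mp.le (hub k hkl) (by linarith)
      calc ∑ k ∈ Finset.range (l + 1), ((μ d k) ^ 2)⁻¹ * t d k
          ≤ ∑ k ∈ Finset.range (l + 1), C₂ ^ (s - 2) * ((μ d k) ^ (-s) * t d k) :=
            Finset.sum_le_sum hterm
        _ = C₂ ^ (s - 2) * ∑ k ∈ Finset.range (l + 1), (μ d k) ^ (-s) * t d k := by
            rw [Finset.mul_sum]
        _ ≤ C₂ ^ (s - 2) * R := by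
            apply mul_le_mul_of_nonneg_left (hsource d hd) (by positivity)
        _ = R * C₂ ^ (s - 2) := by ring
end

section
/- Let γ ∈ (0, ∞) be a non-integer, l = ⌊γ⌋, and s > 0. Define the generalization-error exponent E(s, γ) = max{ l − γ, γ − l − 1, −(l+1)s } and the minimax exponent m(s, γ) as follows: if γ ∈ (p + ps, p + ps + s] for some p ∈ ℕ (p ≥ 0) then m(s, γ) = p − γ, and if γ ∈ (p + ps + s, (p+1) + (p+1)s] for some p ∈ ℕ then m(s, γ) = −(p+1)s. Define the threshold Γ(γ) by: Γ(γ) = ∞ if γ ∈ (0, 1/2]; Γ(γ) = 1 − γ if γ ∈ (1/2, 1); Γ(γ) = (γ − l)/l if γ ∈ (l, l + 1/2] for some integer l ≥ 1; and Γ(γ) = (l + 1 − γ)/(l + 1) if γ ∈ (l + 1/2, l + 1) for some integer l ≥ 1. Then: (a) if 0 < s ≤ Γ(γ), E(s, γ) = m(s, γ) (kernel interpolation attains the minimax rate); and (b) if s > Γ(γ), E(s, γ) > m(s, γ) (kernel interpolation is sub-optimal). -/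
private lemma max3_eq_left (a b c : ℝ) (h1 : b ≤ a) (h2 : c ≤ a) :
    max (max a b) c = a := by
  rw [max_eq_left h1, max_eq_left h2]

private lemma max3_eq_right (a b c : ℝ) (h1 : a ≤ c) (h2 : b ≤ c) :
    max (max a b) c = c := max_eq_right (max_le h1 h2)

private lemma exists_interval (γ s : ℝ) (hγ : 0 < γ) (hs : 0 < s) :
    ∃ p : ℕ, (p : ℝ) + (p : ℝ) * s < γ ∧ γ ≤ ((p : ℝ) + 1) + ((p : ℝ) + 1) * s := by
  have h1s : (0:ℝ) < 1 + s := by linarith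
  have ht : 0 < γ / (1 + s) := div_pos hγ h1s
  set t := γ / (1 + s) with htdef
  have hk : 1 ≤ ⌈t⌉₊ := Nat.one_le_ceil_iff.mpr ht
  have hcast : ((⌈t⌉₊ - 1 : ℕ) : ℝ) = (⌈t⌉₊ : ℝ) - 1 := by
    rw [Nat.cast_sub hk, Nat.cast_one]
  refine ⟨⌈t⌉₊ - 1, ?_, ?_⟩
  · have h2 : (⌈t⌉₊ : ℝ) < t + 1 := Nat.ceil_lt_add_one ht.le
    have h3 : ((⌈t⌉₊ - 1 : ℕ) : ℝ) < t := by rw [hcast]; linarith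
    have h4 := (lt_div_iff₀ h1s).mp h3
    calc ((⌈t⌉₊ - 1 : ℕ) : ℝ) + ((⌈t⌉₊ - 1 : ℕ) : ℝ) * s
        = ((⌈t⌉₊ - 1 : ℕ) : ℝ) * (1 + s) := by ring
      _ < γ := h4
  · have h2 : t ≤ (⌈t⌉₊ : ℝ) := Nat.le_ceil t
    have h3 : t ≤ ((⌈t⌉₊ - 1 : ℕ) : ℝ) + 1 := by rw [hcast]; linarith
    have h4 := (div_le_iff₀ h1s).mp h3
    calc γ ≤ (((⌈t⌉₊ - 1 : ℕ) : ℝ) + 1) * (1 + s) := h4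
      _ = ((⌈t⌉₊ - 1 : ℕ) : ℝ) + 1 + (((⌈t⌉₊ - 1 : ℕ) : ℝ) + 1) * s := by ring

set_option maxHeartbeats 2000000 in
/-- The `(s,γ)`-phase diagram exponent comparison: with `l = ⌊γ⌋`, the
generalization-error exponent `E(s,γ) = max{l−γ, γ−l−1, −(l+1)s}` of kernel
interpolation equals the minimax exponent `m(s,γ)` exactly when `s ≤ Γ(γ)`, and is
strictly larger when `s > Γ(γ)`, where `Γ(γ)` is the threshold of the paper. -/
theorem statement15 (γ s : ℝ) (hγ : 0 < γ) (hγnonint : ∀ n : ℕ, γ ≠ n) (hs : 0 < s)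
    (l : ℕ) (hl : l = ⌊γ⌋₊)
    (E : ℝ) (hE : E = max (max ((l : ℝ) - γ) (γ - (l : ℝ) - 1)) (-(((l : ℝ) + 1) * s)))
    (m : ℝ)
    (hm₁ : ∀ p : ℕ, (p : ℝ) + (p : ℝ) * s < γ → γ ≤ (p : ℝ) + (p : ℝ) * s + s →
      m = (p : ℝ) - γ)
    (hm₂ : ∀ p : ℕ, (p : ℝ) + (p : ℝ) * s + s < γ →
      γ ≤ ((p : ℝ) + 1) + ((p : ℝ) + 1) * s → m = -(((p : ℝ) + 1) * s))
    (Γ : EReal)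
    (hΓ : Γ = if γ ≤ 1 / 2 then (⊤ : EReal)
      else if γ < 1 then ((1 - γ : ℝ) : EReal)
      else if γ - l ≤ 1 / 2 then (((γ - l) / l : ℝ) : EReal)
      else (((l + 1 - γ) / (l + 1) : ℝ) : EReal)) :
    (((s : ℝ) : EReal) ≤ Γ → E = m) ∧ (Γ < ((s : ℝ) : EReal) → m < E) := by
  have hlle : (l:ℝ) ≤ γ := by rw [hl]; exact Nat.floor_le hγ.le
  have hlγ : (l:ℝ) < γ := lt_of_le_of_ne hlle (fun h => hγnonint l h.symm)
  have hγl1 : γ < (l:ℝ) + 1 := by rw [hl]; exact Nat.lt_floor_add_one γ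
  by_cases h₁ : γ ≤ 1/2
  · -- Γ = ⊤
    have hl0 : l = 0 := by
      rw [hl]; exact Nat.floor_eq_zero.mpr (by linarith)
    have hl0R : (l:ℝ) = 0 := by rw [hl0]; simp
    have hls0 : (l:ℝ) * s = 0 := by rw [hl0R]; ring
    constructor
    · intro _
      by_cases hsg : γ ≤ s
      · have hm := hm₁ 0 (by push_cast; linarith) (by push_cast; linarith)
        have hEv : E = (l:ℝ) - γ := by
          rw [hE]; exact max3_eq_left _ _ _ (by linarith) (by linarith)
        rw [hEv, hm]; push_cast; linarith
      · push_neg at hsg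
        have hm := hm₂ 0 (by push_cast; linarith) (by push_cast; linarith)
        have hEv : E = -(((l:ℝ) + 1) * s) := by
          rw [hE]; exact max3_eq_right _ _ _ (by linarith) (by linarith)
        rw [hEv, hm]; push_cast; linarith
    · intro hcon
      rw [hΓ, if_pos h₁] at hcon
      exact absurd hcon not_top_lt
  · by_cases h₂ : γ < 1
    · -- 1/2 < γ < 1, l = 0, Γ = 1 - γ
      push_neg at h₁
      have hl0 : l = 0 := by
        rw [hl]; exact Nat.floor_eq_zero.mpr h₂
      have hl0R : (l:ℝ) = 0 := by rw [hl0]; simp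
      have hls0 : (l:ℝ) * s = 0 := by rw [hl0R]; ring
      constructor
      · intro hsle
        rw [hΓ, if_neg (by linarith), if_pos h₂, EReal.coe_le_coe_iff] at hsle
        have hm := hm₂ 0 (by push_cast; linarith) (by push_cast; linarith)
        have hEv : E = -(((l:ℝ) + 1) * s) := by
          rw [hE]; exact max3_eq_right _ _ _ (by linarith) (by linarith)
        rw [hEv, hm]; push_cast; linarith
      · intro hgt
        rw [hΓ, if_neg (by linarith), if_pos h₂, EReal.coe_lt_coe_iff] at hgt
        by_cases hsg : γ ≤ s
        · have hm := hm₁ 0 (by push_cast; linarith) (by push_cast; linarith)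
          calc m = (0:ℕ) - γ := hm
            _ < γ - (l:ℝ) - 1 := by push_cast; linarith
            _ ≤ E := by rw [hE]; exact le_max_of_le_left (le_max_right _ _)
        · push_neg at hsg
          have hm := hm₂ 0 (by push_cast; linarith) (by push_cast; linarith)
          calc m = -((((0:ℕ):ℝ) + 1) * s) := hm
            _ < γ - (l:ℝ) - 1 := by push_cast; linarith
            _ ≤ E := by rw [hE]; exact le_max_of_le_left (le_max_right _ _)
    · -- γ > 1, l ≥ 1
      push_neg at h₁ h₂
      have hγ1 : 1 < γ := lt_of_le_of_ne h₂ (fun h => hγnonint 1 (by rw [← h]; norm_num))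
      have hl1 : 1 ≤ l := by
        rw [hl]; exact Nat.le_floor (by exact_mod_cast hγ1.le)
      have hl1R : (1:ℝ) ≤ (l:ℝ) := by exact_mod_cast hl1
      have hlpos : (0:ℝ) < (l:ℝ) := by linarith
      by_cases h₃ : γ - (l:ℝ) ≤ 1/2
      · -- Γ = (γ - l)/l
        constructor
        · intro hsle
          rw [hΓ, if_neg (by linarith), if_neg (by linarith), if_pos h₃,
            EReal.coe_le_coe_iff] at hsle
          have hsl : s * (l:ℝ) ≤ γ - (l:ℝ) := (le_div_iff₀ hlpos).mp hsle
          by_cases hcase : γ ≤ (l:ℝ) + (l:ℝ) * s + s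
          · by_cases hcase2 : (l:ℝ) + (l:ℝ) * s < γ
            · have hm := hm₁ l hcase2 hcase
              have hEv : E = (l:ℝ) - γ := by
                rw [hE]; exact max3_eq_left _ _ _ (by linarith) (by linarith)
              rw [hEv, hm]
            · push_neg at hcase2
              have heq : γ = (l:ℝ) + (l:ℝ) * s := by linarith
              have hcastl : ((l - 1 : ℕ) : ℝ) = (l:ℝ) - 1 := by
                rw [Nat.cast_sub hl1, Nat.cast_one]
              have hm := hm₂ (l - 1) (by rw [hcastl]; linarith) (by rw [hcastl]; linarith)
              have hEv : E = (l:ℝ) - γ := by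
                rw [hE]; exact max3_eq_left _ _ _ (by linarith) (by linarith)
              rw [hEv, hm, hcastl]; linarith
          · push_neg at hcase
            have hm := hm₂ l hcase (by nlinarith [mul_nonneg (Nat.cast_nonneg l : (0:ℝ) ≤ l) hs.le])
            have hEv : E = -(((l:ℝ) + 1) * s) := by
              rw [hE]; exact max3_eq_right _ _ _ (by linarith) (by linarith)
            rw [hEv, hm]
        · intro hgt
          rw [hΓ, if_neg (by linarith), if_neg (by linarith), if_pos h₃,
            EReal.coe_lt_coe_iff] at hgt
          have hsl : γ - (l:ℝ) < s * (l:ℝ) := (div_lt_iff₀ hlpos).mp hgt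
          obtain ⟨p, hp1, hp2⟩ := exists_interval γ s hγ hs
          by_cases hc : γ ≤ (p:ℝ) + (p:ℝ) * s + s
          · have hm := hm₁ p hp1 hc
            have hpl : (p:ℝ) < (l:ℝ) := by nlinarith [hs.le]
            calc m = (p:ℝ) - γ := hm
              _ < (l:ℝ) - γ := by linarith
              _ ≤ E := by rw [hE]; exact le_max_of_le_left (le_max_left _ _)
          · push_neg at hc
            have hm := hm₂ p hc hp2
            have key : γ - (l:ℝ) < ((p:ℝ) + 1) * s := by
              by_contra hk
              push_neg at hk
              have h1 : s * γ ≤ s * (((p:ℝ) + 1) + ((p:ℝ) + 1) * s) :=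
                mul_le_mul_of_nonneg_left hp2 hs.le
              have h2 : (((p:ℝ) + 1) * s) * s ≤ (γ - (l:ℝ)) * s :=
                mul_le_mul_of_nonneg_right hk hs.le
              nlinarith [h1, h2, hsl]
            calc m = -(((p:ℝ) + 1) * s) := hm
              _ < (l:ℝ) - γ := by linarith
              _ ≤ E := by rw [hE]; exact le_max_of_le_left (le_max_left _ _)
      · -- Γ = (l + 1 - γ)/(l + 1)
        push_neg at h₃
        have hl1pos : (0:ℝ) < (l:ℝ) + 1 := by linarith
        constructor
        · intro hsle
          rw [hΓ, if_neg (by linarith), if_neg (by linarith), if_neg (by linarith),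
            EReal.coe_le_coe_iff] at hsle
          have hsl : s * ((l:ℝ) + 1) ≤ (l:ℝ) + 1 - γ := (le_div_iff₀ hl1pos).mp hsle
          have hm := hm₂ l (by linarith) (by linarith [mul_pos hl1pos hs])
          have hEv : E = -(((l:ℝ) + 1) * s) := by
            rw [hE]; exact max3_eq_right _ _ _ (by linarith) (by linarith)
          rw [hEv, hm]
        · intro hgt
          rw [hΓ, if_neg (by linarith), if_neg (by linarith), if_neg (by linarith),
            EReal.coe_lt_coe_iff] at hgt
          have hsl : (l:ℝ) + 1 - γ < s * ((l:ℝ) + 1) := (div_lt_iff₀ hl1pos).mp hgt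
          obtain ⟨p, hp1, hp2⟩ := exists_interval γ s hγ hs
          by_cases hc : γ ≤ (p:ℝ) + (p:ℝ) * s + s
          · have hm := hm₁ p hp1 hc
            have hpl : (p:ℝ) < (l:ℝ) + 1 := by
              linarith [mul_nonneg (Nat.cast_nonneg p : (0:ℝ) ≤ (p:ℕ)) hs.le]
            have hplN : p < l + 1 := by exact_mod_cast hpl
            have hplR : (p:ℝ) ≤ (l:ℝ) := by exact_mod_cast Nat.lt_succ_iff.mp hplN
            calc m = (p:ℝ) - γ := hm
              _ < γ - (l:ℝ) - 1 := by linarith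
              _ ≤ E := by rw [hE]; exact le_max_of_le_left (le_max_right _ _)
          · push_neg at hc
            have hm := hm₂ p hc hp2
            have key : (l:ℝ) + 1 - γ < ((p:ℝ) + 1) * s := by
              rcases le_or_gt l p with hlp | hlp
              · have hlpR : (l:ℝ) ≤ (p:ℝ) := by exact_mod_cast hlp
                have h5 := mul_le_mul_of_nonneg_right (by linarith : (l:ℝ) + 1 ≤ (p:ℝ) + 1) hs.le
                linarith [h5]
              · have hlp' : p + 1 ≤ l := hlp
                have hlpR : (p:ℝ) + 1 ≤ (l:ℝ) := by exact_mod_cast hlp'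
                linarith
            calc m = -(((p:ℝ) + 1) * s) := hm
              _ < γ - (l:ℝ) - 1 := by linarith
              _ ≤ E := by rw [hE]; exact le_max_of_le_left (le_max_right _ _)
end
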